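/- Consider the delayed VNLM: h′(t) = a·x(t−τ₁) with h(0) = 0, and x′(t) = (r − h(t))·x(t)·(1 − x(t−τ₂)/k(t)), with continuous positive initial history x(θ) = φ₁(θ) > 0 for θ ∈ [−τ, 0] where τ = max(τ₁, τ₂). For any (arbitrarily large) positive initial history φ₁, there exist choices of the delay parameters τ₁, τ₂ > 0 such that the corresponding solution x exists for all time; that is, x does not blow up in finite time and is bounded on every bounded time interval [0, T]. -/

import Mathlib

open Set Filter MeasureTheory

/-- The variable carrying capacity `k(t) = (k_max − k_min)·(cos(dπt)+1)/2 + k_min`. -/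
noncomputable def kcap (kmin kmax d t : ℝ) : ℝ :=
  (kmax - kmin) * ((Real.cos (d * Real.pi * t) + 1) / 2) + kmin

/-- `(x, h)` is a solution on `[0, b)` of the delayed VNLM
`h′(t) = a·x(t−τ₁)`, `h(0) = 0`,
`x′(t) = (r − h(t))·x(t)·(1 − x(t−τ₂)/k(t))`,
with initial history `x = φ` on `[−τ, 0]`, `τ = max(τ₁, τ₂)`. -/
def DVNLMSolOn (a r d kmin kmax τ₁ τ₂ : ℝ) (φ x h : ℝ → ℝ) (b : ℝ) : Prop :=
  ContinuousOn x (Set.Ico (-(max τ₁ τ₂)) b) ∧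
  (∀ θ ∈ Set.Icc (-(max τ₁ τ₂)) (0:ℝ), x θ = φ θ) ∧
  h 0 = 0 ∧ ContinuousOn h (Set.Ico 0 b) ∧
  (∀ t ∈ Set.Ioo (0:ℝ) b, HasDerivAt h (a * x (t - τ₁)) t) ∧
  (∀ t ∈ Set.Ioo (0:ℝ) b, HasDerivAt x
      ((r - h t) * x t * (1 - x (t - τ₂) / kcap kmin kmax d t)) t)

/-!
Method of steps, with step `δ = min τ₁ τ₂`. If `|x| ≤ C` on `[-τ, T]`, then for `t ∈ [T, T + δ]`
both delayed arguments `t - τ₁`, `t - τ₂` lie in `[-τ, T]`. Hence `|h t| ≤ |a| C t`, and on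
`[T, T + δ]` the equation for `x` is linear, `x' = g x`, with `g` bounded above by an explicit `M`;
then `|x| ≤ C e^{M δ}` there. Induction over the steps bounds `x` on every bounded interval, for
all positive delays.
-/

open Real

theorem abs_sub_le_mul_of_hasDerivAt_of_abs_le {f f' : ℝ → ℝ} {s t C : ℝ} (hst : s ≤ t)
    (hf : ContinuousOn f (Icc s t)) (hf' : ∀ u ∈ Ioo s t, HasDerivAt f (f' u) u)
    (hC : ∀ u ∈ Ioo s t, |f' u| ≤ C) : |f t - f s| ≤ C * (t - s) := by
  rcases hst.eq_or_lt with rfl | hst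
  · simp
  obtain ⟨c, hc, hslope⟩ := exists_hasDerivAt_eq_slope f f' hst hf hf'
  rw [eq_div_iff (sub_ne_zero.2 hst.ne')] at hslope
  rw [← hslope, abs_mul, abs_of_pos (sub_pos.2 hst)]
  exact mul_le_mul_of_nonneg_right (hC c hc) (sub_pos.2 hst).le

theorem abs_le_abs_mul_exp_of_hasDerivAt_mul {x g : ℝ → ℝ} {s t M : ℝ} (hst : s ≤ t)
    (hx : ContinuousOn x (Icc s t)) (hx' : ∀ u ∈ Ioo s t, HasDerivAt x (g u * x u) u)
    (hg : ∀ u ∈ Ioo s t, g u ≤ M) : |x t| ≤ |x s| * exp (M * (t - s)) := by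
  set z : ℝ → ℝ := fun u ↦ x u ^ 2 * exp (-(2 * M) * u)
  have hz' : ∀ u ∈ Ioo s t, HasDerivAt z (2 * (g u - M) * z u) u := fun u hu ↦ by
    have hexp := ((hasDerivAt_id u).const_mul (-(2 * M))).exp
    exact (((hx' u hu).fun_pow 2).mul hexp).congr_deriv (by simp only [z, id]; ring)
  have hanti : AntitoneOn z (Icc s t) := by
    refine antitoneOn_of_hasDerivWithinAt_nonpos (f' := fun u ↦ 2 * (g u - M) * z u)
      (convex_Icc s t) ((hx.pow 2).mul (by fun_prop)) (fun u hu ↦ ?_) (fun u hu ↦ ?_) <;>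
      rw [interior_Icc] at hu
    · exact (hz' u hu).hasDerivWithinAt
    · have hgM : g u - M ≤ 0 := sub_nonpos.2 (hg u hu)
      have hzu : 0 ≤ z u := by positivity
      nlinarith
  have hzts : z t ≤ z s := hanti ⟨le_rfl, hst⟩ ⟨hst, le_rfl⟩ hst
  have hsq : x t ^ 2 ≤ (|x s| * exp (M * (t - s))) ^ 2 := by
    have hexp : exp (-(2 * M) * s) = exp (-(2 * M) * t) * exp (M * (t - s)) ^ 2 := by
      rw [← exp_nat_mul, ← exp_add]
      ring_nf
    simp only [z, hexp] at hzts
    rw [mul_pow, sq_abs]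
    nlinarith [exp_pos (-(2 * M) * t)]
  simpa [abs_of_nonneg (by positivity : 0 ≤ |x s| * exp (M * (t - s)))] using sq_le_sq.1 hsq

theorem kmin_le_kcap {kmin kmax : ℝ} (hk : kmin ≤ kmax) (d t : ℝ) : kmin ≤ kcap kmin kmax d t := by
  have hcos : 0 ≤ (cos (d * π * t) + 1) / 2 := by linarith [neg_one_le_cos (d * π * t)]
  have := mul_nonneg (sub_nonneg.2 hk) hcos
  unfold kcap
  linarith

namespace DVNLMSolOn

variable {a r d kmin kmax τ₁ τ₂ : ℝ} {φ x h : ℝ → ℝ} {b T C : ℝ}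

theorem abs_h_le (hsol : DVNLMSolOn a r d kmin kmax τ₁ τ₂ φ x h b) (hτ₁ : 0 < τ₁)
    (hC : ∀ u ∈ Icc (-max τ₁ τ₂) T, u < b → |x u| ≤ C) {t : ℝ} (ht : t ∈ Ioo 0 b)
    (htT : t ≤ T + τ₁) : |h t| ≤ |a| * C * t := by
  obtain ⟨-, -, hh0, hhc, hh', -⟩ := hsol
  have hdelay : ∀ u ∈ Ioo 0 t, |a * x (u - τ₁)| ≤ |a| * C := fun u hu ↦ by
    rw [abs_mul]
    gcongr
    exact hC _ ⟨by linarith [le_max_left τ₁ τ₂, hu.1], by linarith [hu.2]⟩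
      (by linarith [hu.2, ht.2])
  simpa [hh0] using abs_sub_le_mul_of_hasDerivAt_of_abs_le ht.1.le
    (hhc.mono fun u hu ↦ ⟨hu.1, hu.2.trans_lt ht.2⟩)
    (fun u hu ↦ hh' u ⟨hu.1, hu.2.trans ht.2⟩) hdelay

theorem growth_rate_le (hsol : DVNLMSolOn a r d kmin kmax τ₁ τ₂ φ x h b) (hτ₁ : 0 < τ₁)
    (hτ₂ : 0 < τ₂) (hkmin : 0 < kmin) (hk : kmin ≤ kmax) (hC0 : 0 ≤ C)
    (hC : ∀ u ∈ Icc (-max τ₁ τ₂) T, u < b → |x u| ≤ C) {t : ℝ} (ht : t ∈ Ioo 0 b)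
    (htT : t ≤ T + min τ₁ τ₂) :
    (r - h t) * (1 - x (t - τ₂) / kcap kmin kmax d t) ≤ (|r| + |a| * C * t) * (1 + C / kmin) := by
  have hkt := kmin_le_kcap hk d t
  have hh : |r - h t| ≤ |r| + |a| * C * t := by
    linarith [abs_sub r (h t), hsol.abs_h_le hτ₁ hC ht (by linarith [min_le_left τ₁ τ₂])]
  have hdelay : |x (t - τ₂)| ≤ C :=
    hC _ ⟨by linarith [le_max_right τ₁ τ₂, ht.1], by linarith [min_le_right τ₁ τ₂]⟩
      (by linarith [ht.2])
  have hlogistic : |1 - x (t - τ₂) / kcap kmin kmax d t| ≤ 1 + C / kmin := by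
    refine (abs_sub _ _).trans ?_
    rw [abs_one, abs_div, abs_of_pos (hkmin.trans_le hkt)]
    gcongr
  refine (le_abs_self _).trans ?_
  rw [abs_mul]
  exact mul_le_mul hh hlogistic (abs_nonneg _) ((abs_nonneg _).trans hh)

theorem abs_le_on_next_step (hsol : DVNLMSolOn a r d kmin kmax τ₁ τ₂ φ x h b) (hτ₁ : 0 < τ₁)
    (hτ₂ : 0 < τ₂) (hkmin : 0 < kmin) (hk : kmin ≤ kmax) (hT : 0 ≤ T) (hC0 : 0 ≤ C)
    (hC : ∀ u ∈ Icc (-max τ₁ τ₂) T, u < b → |x u| ≤ C) :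
    ∀ t ∈ Icc (-max τ₁ τ₂) (T + min τ₁ τ₂), t < b →
      |x t| ≤ C * exp ((|r| + |a| * C * (T + min τ₁ τ₂)) * (1 + C / kmin) * min τ₁ τ₂) := by
  set δ := min τ₁ τ₂
  set M := (|r| + |a| * C * (T + δ)) * (1 + C / kmin) with hM
  have hδ : 0 < δ := lt_min hτ₁ hτ₂
  have hM0 : 0 ≤ M := by positivity
  intro t ht htb
  rcases le_or_gt t T with htT | hTt
  · exact (hC t ⟨ht.1, htT⟩ htb).trans (le_mul_of_one_le_right hC0 (one_le_exp (by positivity)))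
  have hTb : T < b := hTt.trans htb
  have hxT : |x T| ≤ C := hC T ⟨by linarith [le_max_left τ₁ τ₂], le_rfl⟩ hTb
  have hgrowth := abs_le_abs_mul_exp_of_hasDerivAt_mul (M := M)
    (g := fun u ↦ (r - h u) * (1 - x (u - τ₂) / kcap kmin kmax d u)) hTt.le
    (hsol.1.mono fun u hu ↦ ⟨by linarith [hu.1, le_max_left τ₁ τ₂], hu.2.trans_lt htb⟩)
    (fun u hu ↦ (hsol.2.2.2.2.2 u ⟨hT.trans_lt hu.1, hu.2.trans htb⟩).congr_deriv (by ring))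
    (fun u hu ↦ by
      have hu0 : 0 < u := hT.trans_lt hu.1
      refine (hsol.growth_rate_le hτ₁ hτ₂ hkmin hk hC0 hC ⟨hu0, hu.2.trans htb⟩
        (by linarith [hu.2, ht.2])).trans ?_
      rw [hM]
      gcongr
      linarith [hu.2, ht.2])
  calc |x t| ≤ |x T| * exp (M * (t - T)) := hgrowth
    _ ≤ C * exp (M * δ) := by
      gcongr
      linarith [ht.2]

theorem exists_abs_le (hsol : DVNLMSolOn a r d kmin kmax τ₁ τ₂ φ x h b) (hτ₁ : 0 < τ₁)
    (hτ₂ : 0 < τ₂) (hkmin : 0 < kmin) (hk : kmin ≤ kmax) (hb : 0 < b) (n : ℕ) :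
    ∃ C, 0 ≤ C ∧ ∀ t ∈ Icc (-max τ₁ τ₂) (n * min τ₁ τ₂), t < b → |x t| ≤ C := by
  induction n with
  | zero =>
    have hτ : -max τ₁ τ₂ ≤ 0 := by linarith [le_max_left τ₁ τ₂]
    obtain ⟨C, hC⟩ := isCompact_Icc.exists_bound_of_continuousOn
      (hsol.1.mono fun t (ht : t ∈ Icc (-max τ₁ τ₂) 0) ↦ ⟨ht.1, ht.2.trans_lt hb⟩)
    refine ⟨C, (norm_nonneg _).trans (hC 0 ⟨hτ, le_rfl⟩), fun t ht _ ↦ ?_⟩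
    simpa using hC t (by simpa using ht)
  | succ n ih =>
    obtain ⟨C, hC0, hC⟩ := ih
    rw [Nat.cast_succ, add_one_mul]
    refine ⟨_, ?_, hsol.abs_le_on_next_step hτ₁ hτ₂ hkmin hk (by positivity) hC0 hC⟩
    positivity

theorem bddAbove_image (hsol : DVNLMSolOn a r d kmin kmax τ₁ τ₂ φ x h b) (hτ₁ : 0 < τ₁)
    (hτ₂ : 0 < τ₂) (hkmin : 0 < kmin) (hk : kmin ≤ kmax) (hb : 0 < b) :
    BddAbove (x '' Ico 0 b) := by
  have hδ : 0 < min τ₁ τ₂ := lt_min hτ₁ hτ₂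
  obtain ⟨C, -, hC⟩ := hsol.exists_abs_le hτ₁ hτ₂ hkmin hk hb ⌈b / min τ₁ τ₂⌉₊
  refine ⟨C, ?_⟩
  rintro _ ⟨t, ht, rfl⟩
  have htn : t ≤ ⌈b / min τ₁ τ₂⌉₊ * min τ₁ τ₂ :=
    ht.2.le.trans ((div_le_iff₀ hδ).1 (Nat.le_ceil _))
  exact (le_abs_self _).trans
    (hC t ⟨by linarith [ht.1, le_max_left τ₁ τ₂], htn⟩ ht.2)

end DVNLMSolOn

theorem delayed_vnlm_no_blowup_general (a r d kmin kmax : ℝ)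
    (hkmin : 0 < kmin) (hk : kmin ≤ kmax)
    (φ₁ : ℝ → ℝ) :
    ∃ τ₁ : ℝ, 0 < τ₁ ∧ ∃ τ₂ : ℝ, 0 < τ₂ ∧
      ∀ (b : ℝ) (x h : ℝ → ℝ), 0 < b →
        DVNLMSolOn a r d kmin kmax τ₁ τ₂ φ₁ x h b →
        BddAbove (x '' Set.Ico 0 b) :=
  ⟨1, one_pos, 1, one_pos, fun _ _ _ hb hsol ↦ hsol.bddAbove_image one_pos one_pos hkmin hk hb⟩

/-- for any (arbitrarily large) continuous positive initial
history `φ₁`, there exist delays `τ₁, τ₂ > 0` such that the corresponding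
solution of the delayed VNLM exists for all time; that is, it does not blow up
in finite time, being bounded on every bounded time interval. -/
theorem delayed_vnlm_no_blowup (a r d kmin kmax : ℝ)
    (ha : 0 < a) (hr : 0 < r) (hd : 0 < d)
    (hkmin : 0 < kmin) (hk : kmin ≤ kmax)
    (φ₁ : ℝ → ℝ) (hφcont : ContinuousOn φ₁ (Set.Iic 0))
    (hφpos : ∀ θ : ℝ, θ ≤ 0 → 0 < φ₁ θ) :
    ∃ τ₁ : ℝ, 0 < τ₁ ∧ ∃ τ₂ : ℝ, 0 < τ₂ ∧
      ∀ (b : ℝ) (x h : ℝ → ℝ), 0 < b →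
        DVNLMSolOn a r d kmin kmax τ₁ τ₂ φ₁ x h b →
        BddAbove (x '' Set.Ico 0 b) :=
  delayed_vnlm_no_blowup_general a r d kmin kmax hkmin hk φ₁
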